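/- Suppose r(v) = r̄ for all v ∈ {1,…,V}, where r̄ > 0. Fix b ∈ {1,…,B} and define T : ℝ → ℝ by T(x) = x + h(b) + min_{s ∈ S} (c(s) − s·(r̄ + x)). If T(0) ≤ 0, then the map v ↦ σ(b,v) is non-increasing on {1,…,V}. -/

import Mathlib

/-!
With a constant reward the recursion reads σ(b,v+1) = T(σ(b,v)) for v < V, so σ(b,v) = Tᵛ(0) for v ≤ V.
Since every s ∈ S is at most 1, the map x ↦ x − s·x is monotone for each s, hence so is T;
the orbit of a monotone map starting at a point with T(0) ≤ 0 is non-increasing.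
-/

/-- `delta S hS c h r b v` is δ(b,v): δ(b,0) = 0 and
δ(b,v) = h(b) + min_{s ∈ S} (c(s) − s·(r(v) + Σ_{i=0}^{v−1} δ(b,i))). -/
noncomputable def delta (S : Finset ℝ) (hS : S.Nonempty) (c : ℝ → ℝ) (h r : ℕ → ℝ)
    (b : ℕ) : ℕ → ℝ
  | 0 => 0
  | v + 1 => h b + S.inf' hS (fun s =>
      c s - s * (r (v + 1) + ∑ i ∈ (Finset.range (v + 1)).attach, delta S hS c h r b i.1))
decreasing_by exact Finset.mem_range.mp i.2

/-- `sigma S hS c h r b v` is σ(b,v) = Σ_{i=0}^{v} δ(b,i). -/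
noncomputable def sigma (S : Finset ℝ) (hS : S.Nonempty) (c : ℝ → ℝ) (h r : ℕ → ℝ)
    (b v : ℕ) : ℝ :=
  ∑ i ∈ Finset.range (v + 1), delta S hS c h r b i

theorem monotone_add_inf'_sub_mul {S : Finset ℝ} (hS : S.Nonempty) (hS1 : ∀ s ∈ S, s ≤ 1)
    (g : ℝ → ℝ) (a : ℝ) :
    Monotone fun x => x + S.inf' hS (fun s => g s - s * (a + x)) := by
  intro x y hxy
  obtain ⟨s, hs, hmin⟩ := S.exists_mem_eq_inf' hS (fun s => g s - s * (a + y))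
  have hx : S.inf' hS (fun s => g s - s * (a + x)) ≤ g s - s * (a + x) := Finset.inf'_le _ hs
  have hslope : s * (y - x) ≤ y - x := mul_le_of_le_one_left (sub_nonneg.mpr hxy) (hS1 s hs)
  simp only [hmin]
  linarith

section Recursion

variable (S : Finset ℝ) (hS : S.Nonempty) (c : ℝ → ℝ) (h r : ℕ → ℝ) (b : ℕ)

theorem sigma_zero : sigma S hS c h r b 0 = 0 := by
  simp [sigma, delta]

theorem sigma_succ (v : ℕ) :
    sigma S hS c h r b (v + 1) =
      sigma S hS c h r b v + h b +
        S.inf' hS (fun s => c s - s * (r (v + 1) + sigma S hS c h r b v)) := by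
  rw [sigma, Finset.sum_range_succ, delta, Finset.sum_attach, add_assoc]
  rfl

theorem sigma_eq_iterate {V : ℕ} {rbar : ℝ} (hr : ∀ v, 1 ≤ v → v ≤ V → r v = rbar)
    {T : ℝ → ℝ} (hT : ∀ x, T x = x + h b + S.inf' hS (fun s => c s - s * (rbar + x))) :
    ∀ v ≤ V, sigma S hS c h r b v = T^[v] 0
  | 0, _ => sigma_zero S hS c h r b
  | v + 1, hv => by
    rw [sigma_succ, hr (v + 1) v.succ_pos' hv, Function.iterate_succ_apply', hT,
      sigma_eq_iterate hr hT v (Nat.le_of_succ_le hv)]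

end Recursion

theorem stmt13_general
    (S : Finset ℝ) (hS : S.Nonempty) (hS01 : ∀ s ∈ S, s ∈ Set.Icc (0 : ℝ) 1)
    (c : ℝ → ℝ)
    (h : ℕ → ℝ)
    (r : ℕ → ℝ)
    (V : ℕ)
    (rbar : ℝ) (hrconst : ∀ v, 1 ≤ v → v ≤ V → r v = rbar)
    (b : ℕ)
    (T : ℝ → ℝ) (hT : ∀ x, T x = x + h b + S.inf' hS (fun s => c s - s * (rbar + x)))
    (hT0 : T 0 ≤ 0) :
    ∀ v v', 1 ≤ v → v ≤ v' → v' ≤ V →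
      sigma S hS c h r b v' ≤ sigma S hS c h r b v := by
  intro v v' _ hvv' hv'V
  have hTmono : Monotone T := fun x y hxy => by
    have := monotone_add_inf'_sub_mul hS (fun s hs => (hS01 s hs).2) c rbar hxy
    simp only [hT]
    linarith
  rw [sigma_eq_iterate S hS c h r b hrconst hT v' hv'V,
    sigma_eq_iterate S hS c h r b hrconst hT v (hvv'.trans hv'V)]
  exact hTmono.antitone_iterate_of_map_le hT0 hvv'

/-- Constant reward r(v) = r̄ on {1,…,V}. With T(x) = x + h(b) + min_{s∈S}(c(s) − s·(r̄+x)),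
if T(0) ≤ 0 then v ↦ σ(b,v) is non-increasing on {1,…,V}. -/
theorem stmt13
    (S : Finset ℝ) (hS : S.Nonempty) (hS01 : ∀ s ∈ S, s ∈ Set.Icc (0 : ℝ) 1)
    (c : ℝ → ℝ) (hc0 : ∀ s ∈ S, 0 ≤ c s)
    (hcmono : ∀ s ∈ S, ∀ s' ∈ S, s ≤ s' → c s ≤ c s')
    (h : ℕ → ℝ) (hh0 : ∀ b, 0 ≤ h b) (hhmono : Monotone h)
    (r : ℕ → ℝ) (hrmono : Monotone r) (hr0 : r 0 = 0) (hrpos : ∀ v, 1 ≤ v → 0 < r v)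
    (B V : ℕ) (hB : 0 < B) (hV : 0 < V)
    (rbar : ℝ) (hrbar : 0 < rbar) (hrconst : ∀ v, 1 ≤ v → v ≤ V → r v = rbar)
    (b : ℕ) (hb1 : 1 ≤ b) (hbB : b ≤ B)
    (T : ℝ → ℝ) (hT : ∀ x, T x = x + h b + S.inf' hS (fun s => c s - s * (rbar + x)))
    (hT0 : T 0 ≤ 0) :
    ∀ v v', 1 ≤ v → v ≤ v' → v' ≤ V →
      sigma S hS c h r b v' ≤ sigma S hS c h r b v :=
  stmt13_general S hS hS01 c h r V rbar hrconst b T hT hT0
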